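/- arXiv:1503.02914 — 4 statements merged into one kernel-verified Lean document; each statement's English description precedes it below -/
import Mathlib

section
/- Let b : Fin n → ℝ and T : Fin n → Fin n → Fin n → ℝ with T i j k = T i k j for all i, j, k. Fix i, and for each j with b j ≠ b i define R i j = ∑_{k : b k ≠ b i ∧ b k ≠ b j} 2 * (T i j k)^2 / ((b k − b i) * (b k − b j)). Then ∑_{j : b j ≠ b i} (R i j) / (b j − b i) = 0. -/
/-!
Multiplying out, the weighted sum is the double sum over `j, k` of
`2 T_{ijk}² / ((b_k - b_i)(b_k - b_j)(b_j - b_i))`. Since `T_{ijk} = T_{ikj}`, this summand changes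
sign when `j` and `k` are exchanged, so the double sum vanishes.
-/

theorem Finset.sum_sum_eq_zero_of_antisymm {ι M : Type*} [AddCommGroup M] [IsAddTorsionFree M]
    (s : Finset ι) {f : ι → ι → M} (hf : ∀ j k, f k j = -f j k) :
    ∑ j ∈ s, ∑ k ∈ s, f j k = 0 := by
  refine self_eq_neg.mp ?_
  calc ∑ j ∈ s, ∑ k ∈ s, f j k = ∑ j ∈ s, ∑ k ∈ s, f k j := Finset.sum_comm
    _ = ∑ j ∈ s, ∑ k ∈ s, -f j k :=
        Finset.sum_congr rfl fun j _ => Finset.sum_congr rfl fun k _ => hf j k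
    _ = -∑ j ∈ s, ∑ k ∈ s, f j k := by simp only [Finset.sum_neg_distrib]

theorem div_mul_sub_mul_sub_swap {K : Type*} [Field K] (c : K) (bi bj bk : K) :
    c / ((bj - bi) * (bj - bk) * (bk - bi)) = -(c / ((bk - bi) * (bk - bj) * (bj - bi))) := by
  rw [← div_neg]
  ring_nf

theorem stmt_2 (n : ℕ) (b : Fin n → ℝ) (T : Fin n → Fin n → Fin n → ℝ)
    (hT : ∀ i j k, T i j k = T i k j) (i : Fin n)
    (R : Fin n → ℝ)
    (hR : ∀ j, b j ≠ b i →
      R j = ∑ k ∈ Finset.univ.filter (fun k => b k ≠ b i ∧ b k ≠ b j),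
        2 * (T i j k) ^ 2 / ((b k - b i) * (b k - b j))) :
    ∑ j ∈ Finset.univ.filter (fun j => b j ≠ b i), R j / (b j - b i) = 0 := by
  -- Division by zero makes `f j k` vanish whenever `b k ∈ {b i, b j}` or `b j = b i`,
  -- so the filters can be dropped.
  set f : Fin n → Fin n → ℝ := fun j k =>
    2 * T i j k ^ 2 / ((b k - b i) * (b k - b j) * (b j - b i)) with hf
  have hf_antisymm : ∀ j k, f k j = -f j k := fun j k => by
    simp only [hf]
    rw [hT i k j, div_mul_sub_mul_sub_swap]
  have hRf : ∀ j, b j ≠ b i → R j / (b j - b i) = ∑ k, f j k := fun j hj => by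
    rw [hR j hj, Finset.sum_div, Finset.sum_filter_of_ne]
    · simp only [hf, div_div]
    · intro k _ hk
      exact ⟨fun hki => hk (by simp [hki]), fun hkj => hk (by simp [hkj])⟩
  calc ∑ j ∈ Finset.univ.filter (fun j => b j ≠ b i), R j / (b j - b i)
      = ∑ j ∈ Finset.univ.filter (fun j => b j ≠ b i), ∑ k, f j k :=
        Finset.sum_congr rfl fun j hj => hRf j (Finset.mem_filter.mp hj).2
    _ = ∑ j, ∑ k, f j k :=
        Finset.sum_filter_of_ne fun j _ hj hji => hj (by simp [hf, hji])
    _ = 0 := Finset.sum_sum_eq_zero_of_antisymm _ hf_antisymm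
end

section
/- Let n ≥ 1 and b : Fin n → ℝ. Suppose that for every index i, ∑_{j : b j ≠ b i} ((b j)^2 − (b i)^2) / ((b j) − (b i))^2 = 0. Then (b i)^2 = (b j)^2 for all i, j; consequently b takes at most two distinct values, and if it takes exactly two distinct values they are λ and −λ for some λ. -/
/-!
At an index `i₀` where `b i₀ ^ 2` is maximal, every term `(b j ^ 2 - b i₀ ^ 2) / (b j - b i₀) ^ 2`
of the sum is nonpositive, so the vanishing of the sum forces each numerator to vanish.
-/

open Finset

section
variable {ι 𝕜 : Type*} [Fintype ι] [Field 𝕜] [LinearOrder 𝕜] [IsStrictOrderedRing 𝕜]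

theorem sq_eq_of_sum_div_eq_zero_of_sq_le {b : ι → 𝕜} {i₀ : ι} (hmax : ∀ j, b j ^ 2 ≤ b i₀ ^ 2)
    (h : ∑ j ∈ univ.filter (fun j => b j ≠ b i₀), (b j ^ 2 - b i₀ ^ 2) / (b j - b i₀) ^ 2 = 0)
    (j : ι) : b j ^ 2 = b i₀ ^ 2 := by
  by_cases hj : b j = b i₀
  · rw [hj]
  have hterm_nonpos : ∀ k ∈ univ.filter (fun k => b k ≠ b i₀),
      (b k ^ 2 - b i₀ ^ 2) / (b k - b i₀) ^ 2 ≤ 0 := fun k _ =>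
    div_nonpos_of_nonpos_of_nonneg (sub_nonpos.mpr (hmax k)) (sq_nonneg _)
  have hterm : (b j ^ 2 - b i₀ ^ 2) / (b j - b i₀) ^ 2 = 0 :=
    (sum_eq_zero_iff_of_nonpos hterm_nonpos).mp h j (by simp [hj])
  have hden : (b j - b i₀) ^ 2 ≠ 0 := pow_ne_zero _ (sub_ne_zero.mpr hj)
  exact sub_eq_zero.mp ((div_eq_zero_iff.mp hterm).resolve_right hden)

theorem sq_eq_sq_of_forall_sum_div_eq_zero {b : ι → 𝕜}
    (h : ∀ i, ∑ j ∈ univ.filter (fun j => b j ≠ b i), (b j ^ 2 - b i ^ 2) / (b j - b i) ^ 2 = 0)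
    (i j : ι) : b i ^ 2 = b j ^ 2 := by
  have : Nonempty ι := ⟨i⟩
  obtain ⟨i₀, hmax⟩ := Finite.exists_max fun k => b k ^ 2
  rw [sq_eq_of_sum_div_eq_zero_of_sq_le hmax (h i₀) i,
    sq_eq_of_sum_div_eq_zero_of_sq_le hmax (h i₀) j]

end

theorem stmt_3_general (n : ℕ) (b : Fin n → ℝ)
    (h : ∀ i, ∑ j ∈ Finset.univ.filter (fun j => b j ≠ b i),
        ((b j) ^ 2 - (b i) ^ 2) / ((b j - b i) ^ 2) = 0) :
    (∀ i j, (b i) ^ 2 = (b j) ^ 2) ∧ (∀ i j, b i = b j ∨ b i = -b j) :=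
  ⟨sq_eq_sq_of_forall_sum_div_eq_zero h, fun i j =>
    sq_eq_sq_iff_eq_or_eq_neg.mp (sq_eq_sq_of_forall_sum_div_eq_zero h i j)⟩

theorem stmt_3 (n : ℕ) (hn : 1 ≤ n) (b : Fin n → ℝ)
    (h : ∀ i, ∑ j ∈ Finset.univ.filter (fun j => b j ≠ b i),
        ((b j) ^ 2 - (b i) ^ 2) / ((b j - b i) ^ 2) = 0) :
    (∀ i j, (b i) ^ 2 = (b j) ^ 2) ∧ (∀ i j, b i = b j ∨ b i = -b j) :=
  stmt_3_general n b h
end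

section
/- Let t ≥ 3, let b : Fin t → ℝ be strictly increasing, let ε, d : ℝ, define a k = ε * (b k) + d and R k l = (b k) * (b l) + (a k) + (a l). Assume: (i) R k (k+1) ≥ 0 for all k with k+1 < t; (ii) R 0 (t−1) ≤ 0; (iii) for every k, ∑_{m ≠ k} (R k m) / ((b k) − (b m)) = 0. Then ε^2 − 2*d < 0. -/
/-!
Put `c k = b k + ε` and `D = 2d - ε²`, so that `R k l = c k * c l + D` and `b k - b l = c k - c l`.
If `D < 0`, the consecutive products `c k * c (k+1) ≥ -D > 0` force all `c k` to have one sign, and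
monotonicity then gives `c 0 * c (t-1) > -D`, against `R 0 (t-1) ≤ 0`. If `D = 0`, the Cartan
identity at `k` reads `c k * ∑ c m / (c k - c m) = 0`; at the index of smallest nonzero `|c k|` no
`c m` lies strictly between `0` and `c k`, so every term has the sign of `-c k` and one is nonzero.
-/

lemma mul_pos_of_mul_pos_of_mul_pos {x y z : ℝ} (hxy : 0 < x * y) (hyz : 0 < y * z) :
    0 < x * z := by
  have : 0 < y ^ 2 * (x * z) := by nlinarith
  exact pos_of_mul_pos_right this (sq_nonneg y)

lemma mul_pos_of_forall_consecutive {t : ℕ} (ht : 1 < t) (c : Fin t → ℝ)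
    (h : ∀ k (hk : k + 1 < t), 0 < c ⟨k, by omega⟩ * c ⟨k + 1, hk⟩) (j : Fin t) :
    0 < c ⟨0, by omega⟩ * c j := by
  obtain ⟨j, hj⟩ := j
  induction j with
  | zero =>
    have h01 := h 0 ht
    exact mul_self_pos.mpr (left_ne_zero_of_mul h01.ne')
  | succ j ih => exact mul_pos_of_mul_pos_of_mul_pos (ih (by omega)) (h j hj)

lemma lt_mul_first_last_of_le_mul_consecutive {t : ℕ} (ht : 2 < t) {c : Fin t → ℝ}
    (hc : StrictMono c) {p : ℝ} (hp : 0 < p)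
    (h : ∀ k (hk : k + 1 < t), p ≤ c ⟨k, by omega⟩ * c ⟨k + 1, hk⟩) :
    p < c ⟨0, by omega⟩ * c ⟨t - 1, by omega⟩ := by
  have hsign := mul_pos_of_forall_consecutive (by omega) c (fun k hk => hp.trans_le (h k hk))
  rcases (left_ne_zero_of_mul (hsign ⟨0, by omega⟩).ne').lt_or_gt with hneg | hpos
  · have hlast : c ⟨t - 1, by omega⟩ < 0 := neg_of_mul_pos_right (hsign _) hneg.le
    have hlt : c ⟨0, by omega⟩ < c ⟨t - 2, by omega⟩ := hc (Fin.mk_lt_mk.mpr (by omega))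
    have hp' : p ≤ c ⟨t - 2, by omega⟩ * c ⟨t - 1, by omega⟩ := by
      convert h (t - 2) (by omega) using 4; omega
    nlinarith
  · have hlt : c ⟨1, by omega⟩ < c ⟨t - 1, by omega⟩ := hc (Fin.mk_lt_mk.mpr (by omega))
    have hp' : p ≤ c ⟨0, by omega⟩ * c ⟨1, by omega⟩ := h 0 (by omega)
    nlinarith

lemma sum_div_sub_neg {ι : Type*} (s : Finset ι) (c : ι → ℝ) (x : ℝ)
    (hs : ∀ m ∈ s, c m * (x - c m) ≤ 0) {j : ι} (hj : j ∈ s) (hj0 : c j ≠ 0) (hjx : c j ≠ x) :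
    ∑ m ∈ s, c m / (x - c m) < 0 := by
  have hterm : ∀ m, c m / (x - c m) = c m * (x - c m) / (x - c m) ^ 2 := by
    intro m
    rcases eq_or_ne (x - c m) 0 with h | h
    · simp [h]
    · field_simp
  simp only [hterm]
  refine Finset.sum_neg' (fun m hm => div_nonpos_of_nonpos_of_nonneg (hs m hm) (sq_nonneg _)) ⟨j, hj, ?_⟩
  have hsub : x - c j ≠ 0 := sub_ne_zero.mpr hjx.symm
  exact div_neg_of_neg_of_pos ((hs j hj).lt_of_ne (mul_ne_zero hj0 hsub)) (by positivity)

lemma exists_ne_apply_ne_zero {ι : Type*} [Fintype ι] (hι : 3 ≤ Fintype.card ι) {c : ι → ℝ}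
    (hc : Function.Injective c) (k : ι) : ∃ j, j ≠ k ∧ c j ≠ 0 := by
  classical
  have hcard : 1 < (Finset.univ.erase k).card := by
    rw [Finset.card_erase_of_mem (Finset.mem_univ k), Finset.card_univ]
    omega
  obtain ⟨i, hi, j, hj, hij⟩ := Finset.one_lt_card.mp hcard
  by_cases hci : c i = 0
  · exact ⟨j, Finset.ne_of_mem_erase hj, fun hcj => hij (hc (hci.trans hcj.symm))⟩
  · exact ⟨i, Finset.ne_of_mem_erase hi, hci⟩

lemma exists_sum_div_sub_neg {ι : Type*} [Fintype ι] [DecidableEq ι]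
    (hι : 3 ≤ Fintype.card ι) {c : ι → ℝ} (hc : Function.Injective c) :
    ∃ k, c k ≠ 0 ∧ ∑ m ∈ Finset.univ.filter (fun m => m ≠ k), c m / (c k - c m) < 0 := by
  have hne : (Finset.univ.filter (fun i => c i ≠ 0)).Nonempty := by
    have : Nonempty ι := Fintype.card_pos_iff.mp (by omega)
    obtain ⟨j, -, hj⟩ := exists_ne_apply_ne_zero hι hc (Classical.arbitrary ι)
    exact ⟨j, Finset.mem_filter.mpr ⟨Finset.mem_univ j, hj⟩⟩
  obtain ⟨k, hk, hmin⟩ := Finset.exists_min_image _ (fun i => |c i|) hne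
  have hk0 : c k ≠ 0 := (Finset.mem_filter.mp hk).2
  obtain ⟨j, hjk, hj0⟩ := exists_ne_apply_ne_zero hι hc k
  refine ⟨k, hk0, sum_div_sub_neg _ c _ ?_ (Finset.mem_filter.mpr ⟨Finset.mem_univ j, hjk⟩) hj0
    (hc.ne hjk)⟩
  -- a term of the wrong sign would put `c m` strictly between `0` and `c k`
  intro m _
  by_contra! hpos
  have hm0 : c m ≠ 0 := by rintro h; simp [h] at hpos
  have hle : |c k| ≤ |c m| := hmin m (Finset.mem_filter.mpr ⟨Finset.mem_univ m, hm0⟩)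
  have hlt : |c m| * |c m| < |c m| * |c k| := by
    rw [abs_mul_abs_self, ← abs_mul]
    exact (by linarith : c m * c m < c m * c k).trans_le (le_abs_self _)
  nlinarith [abs_nonneg (c m)]

theorem stmt_7 (t : ℕ) (ht : 3 ≤ t) (b : Fin t → ℝ) (hb : StrictMono b)
    (ε d : ℝ) (a : Fin t → ℝ) (ha : ∀ k, a k = ε * b k + d)
    (R : Fin t → Fin t → ℝ) (hRdef : ∀ k l, R k l = b k * b l + a k + a l)
    (hconsec : ∀ k : ℕ, (h : k + 1 < t) →
      0 ≤ R ⟨k, Nat.lt_of_succ_lt h⟩ ⟨k + 1, h⟩)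
    (hext : R ⟨0, by omega⟩ ⟨t - 1, by omega⟩ ≤ 0)
    (hcartan : ∀ k : Fin t,
      ∑ m ∈ Finset.univ.filter (fun m => m ≠ k), R k m / (b k - b m) = 0) :
    ε ^ 2 - 2 * d < 0 := by
  set c : Fin t → ℝ := fun k => b k + ε
  have hc : StrictMono c := fun i j hij => by simpa [c] using hb hij
  have hR : ∀ k l, R k l = c k * c l - (ε ^ 2 - 2 * d) := fun k l => by
    rw [hRdef, ha, ha]; ring
  by_contra! hnonneg
  rcases hnonneg.lt_or_eq with hpos | hzero
  · have hfirst_last := lt_mul_first_last_of_le_mul_consecutive ht hc hpos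
      (fun k hk => by linarith [hR ⟨k, by omega⟩ ⟨k + 1, hk⟩, hconsec k hk])
    linarith [hR ⟨0, by omega⟩ ⟨t - 1, by omega⟩]
  · obtain ⟨k, hk0, hneg⟩ := exists_sum_div_sub_neg (by simpa using ht) hc.injective
    have hfactor : ∑ m ∈ Finset.univ.filter (fun m => m ≠ k), R k m / (b k - b m)
        = c k * ∑ m ∈ Finset.univ.filter (fun m => m ≠ k), c m / (c k - c m) := by
      rw [Finset.mul_sum]
      refine Finset.sum_congr rfl fun m _ => ?_
      rw [hR, ← hzero]
      simp only [c]
      ring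
    have hk := hcartan k
    rw [hfactor] at hk
    exact hneg.ne ((mul_eq_zero.mp hk).resolve_left hk0)
end

section
/- Let b : Fin n → ℝ and let T : Fin n → Fin n → Fin n → ℝ be fully symmetric (invariant under all permutations of its three indices) with T i j k = 0 whenever at least two of b i, b j, b k are equal. Suppose that for all i, j with b i ≠ b j, ∑_{k : b k ≠ b i ∧ b k ≠ b j} (T i j k)^2 / ((b k − b i) * (b k − b j)) ≤ 0. Then T i j k = 0 for all i, j, k. -/
/-!
Induct on the gap `|b i - b j|` of a pair with `b i ≠ b j`. In the curvature sum for `(i, j)`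
the only terms with a negative denominator are those with `b k` strictly between `b i` and
`b j`; for them `T i j k = T i k j` vanishes by induction, since `(i, k)` has a smaller gap.
All remaining terms are nonnegative, so a nonpositive sum forces every one of them to vanish.
-/

open Finset

section

variable {𝕜 : Type*} [Field 𝕜] [LinearOrder 𝕜] [IsStrictOrderedRing 𝕜]

theorem abs_lt_abs_sub_of_mul_neg {c d : 𝕜} (h : c * d < 0) : |c| < |c - d| :=
  sq_lt_sq.mp (by nlinarith [sq_nonneg d])

theorem eq_zero_of_sum_sq_div_nonpos {ι : Type*} {s : Finset ι} {t d : ι → 𝕜}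
    (hd_ne : ∀ k ∈ s, d k ≠ 0) (hd_neg : ∀ k ∈ s, d k < 0 → t k = 0)
    (hsum : ∑ k ∈ s, t k ^ 2 / d k ≤ 0) {k : ι} (hk : k ∈ s) : t k = 0 := by
  have hnonneg : ∀ k ∈ s, 0 ≤ t k ^ 2 / d k := fun k hk => by
    rcases lt_or_ge (d k) 0 with hneg | hpos
    · simp [hd_neg k hk hneg]
    · exact div_nonneg (sq_nonneg _) hpos
  have hterm := (sum_eq_zero_iff_of_nonneg hnonneg).mp (hsum.antisymm (sum_nonneg hnonneg)) k hk
  simpa [hd_ne k hk] using hterm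

theorem apply_eq_zero_of_forall_smaller_gap {ι : Type*} [Fintype ι] {b : ι → 𝕜}
    {T : ι → ι → ι → 𝕜} (hswap : ∀ i j k, T i j k = T i k j)
    (hvanish : ∀ i j k, b i = b j ∨ b j = b k ∨ b i = b k → T i j k = 0) {i j : ι}
    (hcurv : ∑ k ∈ univ.filter (fun k => b k ≠ b i ∧ b k ≠ b j),
      T i j k ^ 2 / ((b k - b i) * (b k - b j)) ≤ 0)
    (ih : ∀ m, |b i - b m| < |b i - b j| → b i ≠ b m → ∀ k, T i m k = 0) (k : ι) :
    T i j k = 0 := by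
  by_cases hk : b k ≠ b i ∧ b k ≠ b j
  · refine eq_zero_of_sum_sq_div_nonpos (fun m hm => ?_) (fun m hm hneg => ?_) hcurv
      (by simpa using hk)
    · simp only [mem_filter, mem_univ, true_and] at hm
      exact mul_ne_zero (sub_ne_zero.mpr hm.1) (sub_ne_zero.mpr hm.2)
    · simp only [mem_filter, mem_univ, true_and] at hm
      have hgap := abs_lt_abs_sub_of_mul_neg hneg
      rw [sub_sub_sub_cancel_left, abs_sub_comm, abs_sub_comm (b j)] at hgap
      rw [hswap]
      exact ih m hgap hm.1.symm j
  · rw [not_and_or, not_ne_iff, not_ne_iff] at hk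
    exact hvanish i j k (Or.inr (hk.symm.imp Eq.symm Eq.symm))

end

theorem stmt_10 (n : ℕ) (b : Fin n → ℝ) (T : Fin n → Fin n → Fin n → ℝ)
    (hsym : ∀ (i j k : Fin n) (σ : Equiv.Perm (Fin 3)),
      T i j k = T (![i, j, k] (σ 0)) (![i, j, k] (σ 1)) (![i, j, k] (σ 2)))
    (hvanish : ∀ i j k, b i = b j ∨ b j = b k ∨ b i = b k → T i j k = 0)
    (hcurv : ∀ i j, b i ≠ b j →
      ∑ k ∈ Finset.univ.filter (fun k => b k ≠ b i ∧ b k ≠ b j),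
        (T i j k) ^ 2 / ((b k - b i) * (b k - b j)) ≤ 0) :
    ∀ i j k, T i j k = 0 := by
  have hswap : ∀ i j k, T i j k = T i k j := fun i j k => hsym i j k (Equiv.swap 1 2)
  let gap : Fin n × Fin n → ℝ := fun p => |b p.1 - b p.2|
  have hwf : WellFounded (InvImage (· < ·) gap) := Finite.wellFounded_of_trans_of_irrefl _
  have hpair (p : Fin n × Fin n) : b p.1 ≠ b p.2 → ∀ k, T p.1 p.2 k = 0 := by
    induction p using hwf.induction with
    | h p ih =>
      exact fun hp => apply_eq_zero_of_forall_smaller_gap hswap hvanish (hcurv _ _ hp)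
        fun m hm hpm => ih (p.1, m) hm hpm
  intro i j k
  by_cases hij : b i = b j
  · exact hvanish i j k (Or.inl hij)
  · exact hpair (i, j) hij k
end
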